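/- arXiv:2002.11929 — 6 statements merged into one kernel-verified Lean document; each statement's English description precedes it below -/
import Mathlib

section
/- Let T be a t-norm and let R be a fuzzy T-equivalence on a set U with a dually well-ordered spectrum. Then for any subset A ⊆ U, A^E = {x ∈ U | μ_{[A]^R}(x) = 1}; that is, the upper approximation of A by the crisp equivalence E equals the core of the fuzzy upper approximation of A. -/
open unitInterval

noncomputable section

instance : Fact ((0:ℝ) ≤ 1) := ⟨zero_le_one⟩

/-- A t-norm on the unit interval: commutative, associative, monotone in each
argument, with `1` as unit. -/
def IsTnorm (T : I → I → I) : Prop :=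
  (∀ x y, T x y = T y x) ∧
  (∀ x y z, T (T x y) z = T x (T y z)) ∧
  (∀ x₁ x₂ y, x₁ ≤ x₂ → T x₁ y ≤ T x₂ y) ∧
  (∀ x y₁ y₂, y₁ ≤ y₂ → T x y₁ ≤ T x y₂) ∧
  (∀ x, T x 1 = x)

/-- A fuzzy `T`-equivalence: reflexive, symmetric, `T`-transitive fuzzy relation. -/
def IsFuzzyTEquiv {U : Type*} (T : I → I → I) (μ : U → U → I) : Prop :=
  (∀ x, μ x x = 1) ∧ (∀ x y, μ x y = μ y x) ∧ (∀ x y z, T (μ x y) (μ y z) ≤ μ x z)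

/-- Fuzzy upper approximation of a crisp set `A`: `sup {μ x y | y ∈ A}` (`sup ∅ = 0`). -/
def upperApp {U : Type*} (μ : U → U → I) (A : Set U) (x : U) : I := sSup (μ x '' A)

/-- Fuzzy lower approximation of a crisp set `A`: `inf {1 - μ x y | y ∉ A}` (`inf ∅ = 1`). -/
def lowerApp {U : Type*} (μ : U → U → I) (A : Set U) (x : U) : I :=
  sInf ((fun y => σ (μ x y)) '' Aᶜ)

/-- The spectrum of a fuzzy relation. -/
def fuzzySpectrum {U : Type*} (μ : U → U → I) : Set I := {r | ∃ x y, μ x y = r}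

/-- `R` has a dually well-ordered spectrum: every nonempty subset of the
spectrum has a greatest element. -/
def DuallyWellOrdered {U : Type*} (μ : U → U → I) : Prop :=
  ∀ s ⊆ fuzzySpectrum μ, s.Nonempty → ∃ m ∈ s, ∀ r ∈ s, r ≤ m

/-- Upper approximation by the crisp equivalence `E = {(x,y) | μ x y = 1}`. -/
def upperE {U : Type*} (μ : U → U → I) (A : Set U) : Set U :=
  {x | ({y | μ x y = 1} ∩ A).Nonempty}

/-- Lower approximation by the crisp equivalence `E = {(x,y) | μ x y = 1}`. -/
def lowerE {U : Type*} (μ : U → U → I) (A : Set U) : Set U :=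
  {x | {y | μ x y = 1} ⊆ A}

/-- Upper approximation by the support relation `S = {(x,y) | μ x y > 0}`. -/
def upperS {U : Type*} (μ : U → U → I) (A : Set U) : Set U :=
  {x | ({y | 0 < μ x y} ∩ A).Nonempty}

/-- Lower approximation by the support relation `S = {(x,y) | μ x y > 0}`. -/
def lowerS {U : Type*} (μ : U → U → I) (A : Set U) : Set U :=
  {x | {y | 0 < μ x y} ⊆ A}

/- A dually well-ordered spectrum makes `sup {μ x y | y ∈ A}` a maximum, so it equals `1`
exactly when `μ x y = 1` for some `y ∈ A`. -/

section

variable {U : Type*} {μ : U → U → I}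

theorem upperApp_empty (x : U) : upperApp μ ∅ x = 0 := by
  rw [upperApp, Set.image_empty, sSup_empty]
  rfl

theorem mem_upperE_iff_one_mem_image {A : Set U} {x : U} :
    x ∈ upperE μ A ↔ (1 : I) ∈ μ x '' A := by
  simp only [upperE, Set.mem_ofPred_eq, Set.Nonempty, Set.mem_inter_iff, Set.mem_image]
  exact exists_congr fun y => and_comm

theorem DuallyWellOrdered.upperApp_mem_image (hD : DuallyWellOrdered μ) {A : Set U}
    (hA : A.Nonempty) (x : U) : upperApp μ A x ∈ μ x '' A := by
  obtain ⟨m, hm, hmax⟩ := hD (μ x '' A) (by rintro _ ⟨y, -, rfl⟩; exact ⟨x, y, rfl⟩)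
    (hA.image (μ x))
  have hm_greatest : IsGreatest (μ x '' A) m := ⟨hm, fun r hr => hmax r hr⟩
  rwa [upperApp, IsGreatest.csSup_eq hm_greatest]

end

theorem stmt1_general {U : Type*} (μ : U → U → I)
    (hD : DuallyWellOrdered μ)
    (A : Set U) :
    upperE μ A = {x | upperApp μ A x = 1} := by
  ext x
  rw [mem_upperE_iff_one_mem_image, Set.mem_ofPred_eq]
  refine ⟨fun h => top_unique (le_sSup h), fun hx => ?_⟩
  have hA : A.Nonempty := Set.nonempty_iff_ne_empty.mpr fun hA => by
    simp [hA, upperApp_empty] at hx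
  simpa only [hx] using hD.upperApp_mem_image hA x

/-- `A^E` equals the core of the fuzzy upper approximation of `A`. -/
theorem stmt1 {U : Type*} (T : I → I → I) (μ : U → U → I)
    (hT : IsTnorm T) (hR : IsFuzzyTEquiv T μ) (hD : DuallyWellOrdered μ)
    (A : Set U) :
    upperE μ A = {x | upperApp μ A x = 1} :=
  stmt1_general μ hD A
end
end

section
/- Let T be a t-norm and let R be a fuzzy T-equivalence on a set U with a dually well-ordered spectrum. Then for any subset A ⊆ U, A_E = {x ∈ U | μ_{[A]_R}(x) > 0}; that is, the lower approximation of A by the crisp equivalence E equals the support of the fuzzy lower approximation of A. -/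
open unitInterval

noncomputable section

/-! `x ∈ A_E` says that `μ x y < 1` for every `y ∉ A`, while `μ_{[A]_R}(x) = 1 - sup {μ x y | y ∉ A}`.
Without further assumptions such a supremum can be `1` while every term is below `1`; a dually
well-ordered spectrum makes it a maximum, so it is below `1` exactly when every term is. -/

lemma unitInterval.symm_pos_iff {t : I} : 0 < σ t ↔ t < 1 := by
  rw [lt_symm_comm, symm_zero]

section LowerApproximation

variable {U : Type*} {μ : U → U → I} {A : Set U}

lemma lowerApp_le_symm {x y : U} (hy : y ∉ A) : lowerApp μ A x ≤ σ (μ x y) :=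
  sInf_le ⟨y, hy, rfl⟩

lemma lowerApp_eq_one_of_compl_eq_empty (hA : Aᶜ = ∅) (x : U) : lowerApp μ A x = 1 := by
  rw [lowerApp, hA, Set.image_empty, sInf_empty]
  rfl

lemma DuallyWellOrdered.exists_lowerApp_eq (hD : DuallyWellOrdered μ) (hA : Aᶜ.Nonempty)
    (x : U) : ∃ y ∉ A, lowerApp μ A x = σ (μ x y) := by
  have hspec : μ x '' Aᶜ ⊆ fuzzySpectrum μ := by
    rintro _ ⟨y, -, rfl⟩
    exact ⟨x, y, rfl⟩
  obtain ⟨_, ⟨y, hy, rfl⟩, hmax⟩ := hD _ hspec (hA.image _)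
  refine ⟨y, hy, IsLeast.csInf_eq ⟨⟨y, hy, rfl⟩, ?_⟩⟩
  rintro _ ⟨z, hz, rfl⟩
  exact symm_le_symm.mpr (hmax _ ⟨z, hz, rfl⟩)

lemma setOf_lowerApp_pos_subset_lowerE : {x | 0 < lowerApp μ A x} ⊆ lowerE μ A := by
  intro x hx y hxy
  by_contra hy
  have hle : lowerApp μ A x ≤ σ (μ x y) := lowerApp_le_symm hy
  rw [hxy.out, symm_one] at hle
  exact hle.not_gt hx

lemma DuallyWellOrdered.lowerE_subset_setOf_lowerApp_pos (hD : DuallyWellOrdered μ) :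
    lowerE μ A ⊆ {x | 0 < lowerApp μ A x} := by
  intro x hx
  rcases Aᶜ.eq_empty_or_nonempty with hA | hA
  · simp [lowerApp_eq_one_of_compl_eq_empty hA x]
  · obtain ⟨y, hy, hxy⟩ := hD.exists_lowerApp_eq hA x
    rw [Set.mem_ofPred_eq, hxy, symm_pos_iff]
    exact lt_of_le_of_ne le_one' fun h => hy (hx h)

end LowerApproximation

theorem stmt2_general {U : Type*} (μ : U → U → I)
    (hD : DuallyWellOrdered μ)
    (A : Set U) :
    lowerE μ A = {x | 0 < lowerApp μ A x} :=
  hD.lowerE_subset_setOf_lowerApp_pos.antisymm setOf_lowerApp_pos_subset_lowerE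

/-- `A_E` equals the support of the fuzzy lower approximation of `A`. -/
theorem stmt2 {U : Type*} (T : I → I → I) (μ : U → U → I)
    (hT : IsTnorm T) (hR : IsFuzzyTEquiv T μ) (hD : DuallyWellOrdered μ)
    (A : Set U) :
    lowerE μ A = {x | 0 < lowerApp μ A x} :=
  stmt2_general μ hD A
end
end

section
/- Let T be a t-norm and let R be a fuzzy T-equivalence on a set U with a dually well-ordered spectrum. Then for any subset A ⊆ U, the fuzzy upper approximation of A equals the fuzzy upper approximation of A^E, i.e., μ_{[A]^R}(x) = μ_{[A^E]^R}(x) for all x ∈ U. -/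
open unitInterval

noncomputable section

theorem upperApp_mono {U : Type*} (μ : U → U → I) {A B : Set U} (hAB : A ⊆ B) (x : U) :
    upperApp μ A x ≤ upperApp μ B x :=
  sSup_le_sSup (Set.image_mono hAB)

theorem subset_upperE {U : Type*} {μ : U → U → I} (hrefl : ∀ x, μ x x = 1) (A : Set U) :
    A ⊆ upperE μ A :=
  fun y hy => ⟨y, hrefl y, hy⟩

theorem le_of_rel_eq_one {U : Type*} {T : I → I → I} {μ : U → U → I}
    (hunit : ∀ a, T a 1 = a) (htrans : ∀ x y z, T (μ x y) (μ y z) ≤ μ x z)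
    {x y z : U} (hzy : μ z y = 1) : μ x z ≤ μ x y := by
  simpa only [hzy, hunit] using htrans x z y

theorem upperApp_upperE_le {U : Type*} {T : I → I → I} {μ : U → U → I}
    (hunit : ∀ a, T a 1 = a) (htrans : ∀ x y z, T (μ x y) (μ y z) ≤ μ x z)
    (A : Set U) (x : U) : upperApp μ (upperE μ A) x ≤ upperApp μ A x := by
  refine sSup_le ?_
  rintro _ ⟨z, ⟨y, hzy, hyA⟩, rfl⟩
  exact (le_of_rel_eq_one hunit htrans hzy).trans (le_sSup ⟨y, hyA, rfl⟩)

theorem stmt5_general {U : Type*} (T : I → I → I) (μ : U → U → I)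
    (hT : IsTnorm T) (hR : IsFuzzyTEquiv T μ)
    (A : Set U) :
    ∀ x : U, upperApp μ A x = upperApp μ (upperE μ A) x := fun x =>
  le_antisymm (upperApp_mono μ (subset_upperE hR.1 A) x)
    (upperApp_upperE_le hT.2.2.2.2 hR.2.2 A x)

/-- `μ_[A]^R = μ_[A^E]^R`. -/
theorem stmt5 {U : Type*} (T : I → I → I) (μ : U → U → I)
    (hT : IsTnorm T) (hR : IsFuzzyTEquiv T μ) (hD : DuallyWellOrdered μ)
    (A : Set U) :
    ∀ x : U, upperApp μ A x = upperApp μ (upperE μ A) x :=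
  stmt5_general T μ hT hR A
end
end

section
/- Let T be a t-norm and let R be a fuzzy T-equivalence on a set U with a dually well-ordered spectrum. If A, B ⊆ U satisfy A_E = B_E and A^E = B^E, then μ_{[A]_R} = μ_{[B]_R} and μ_{[A]^R} = μ_{[B]^R}; i.e., the map sending the crisp rough set (A_E, A^E) to the fuzzy rough set (μ_{[A]_R}, μ_{[A]^R}) is well-defined. -/
open unitInterval

noncomputable section

/-!
The upper approximation of `A` depends only on `A^E`: a point `y ∈ A` may be replaced by any
`z ∈ A` with `μ y z = 1`, because `T`-transitivity and `T a 1 = a` give `μ x y ≤ μ x z`.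
The lower approximation of `A` is `σ` of the upper approximation of `Aᶜ`, and `(Aᶜ)^E` is the
complement of `A_E`.
-/

lemma sInf_image_symm (s : Set I) : sInf (σ '' s) = σ (sSup s) := by
  refine le_antisymm (le_symm_comm.1 (sSup_le fun t ht => ?_)) (le_sInf ?_)
  · exact le_symm_comm.1 (sInf_le (Set.mem_image_of_mem σ ht))
  · rintro _ ⟨t, ht, rfl⟩
    exact symm_le_symm.2 (le_sSup ht)

lemma lowerApp_eq_symm_upperApp_compl {U : Type*} (μ : U → U → I) (A : Set U) (x : U) :
    lowerApp μ A x = σ (upperApp μ Aᶜ x) := by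
  rw [lowerApp, upperApp, ← sInf_image_symm, Set.image_image]

lemma upperE_compl {U : Type*} (μ : U → U → I) (A : Set U) :
    upperE μ Aᶜ = (lowerE μ A)ᶜ := by
  ext x
  simp [upperE, lowerE, Set.not_subset, Set.Nonempty]

section FuzzyTEquiv

variable {U : Type*} {T : I → I → I} {μ : U → U → I}

lemma IsFuzzyTEquiv.le_of_eq_one (hT : IsTnorm T) (hR : IsFuzzyTEquiv T μ) {y z : U}
    (hyz : μ y z = 1) (x : U) : μ x y ≤ μ x z :=
  calc μ x y = T (μ x y) (μ y z) := by rw [hyz, hT.2.2.2.2]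
    _ ≤ μ x z := hR.2.2 x y z

lemma IsFuzzyTEquiv.upperApp_mono (hT : IsTnorm T) (hR : IsFuzzyTEquiv T μ) {A B : Set U}
    (h : upperE μ A ⊆ upperE μ B) : upperApp μ A ≤ upperApp μ B := by
  intro x
  refine sSup_le ?_
  rintro _ ⟨y, hyA, rfl⟩
  obtain ⟨z, hyz, hzB⟩ := h ⟨y, hR.1 y, hyA⟩
  exact (hR.le_of_eq_one hT hyz x).trans (le_sSup ⟨z, hzB, rfl⟩)

lemma IsFuzzyTEquiv.upperApp_congr (hT : IsTnorm T) (hR : IsFuzzyTEquiv T μ) {A B : Set U}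
    (h : upperE μ A = upperE μ B) : upperApp μ A = upperApp μ B :=
  le_antisymm (hR.upperApp_mono hT h.le) (hR.upperApp_mono hT h.ge)

lemma IsFuzzyTEquiv.lowerApp_congr (hT : IsTnorm T) (hR : IsFuzzyTEquiv T μ) {A B : Set U}
    (h : lowerE μ A = lowerE μ B) : lowerApp μ A = lowerApp μ B := by
  have hc : upperApp μ Aᶜ = upperApp μ Bᶜ :=
    hR.upperApp_congr hT (by rw [upperE_compl, upperE_compl, h])
  funext x
  rw [lowerApp_eq_symm_upperApp_compl, lowerApp_eq_symm_upperApp_compl, hc]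

end FuzzyTEquiv

theorem stmt7_general {U : Type*} (T : I → I → I) (μ : U → U → I)
    (hT : IsTnorm T) (hR : IsFuzzyTEquiv T μ)
    (A B : Set U) (h₁ : lowerE μ A = lowerE μ B) (h₂ : upperE μ A = upperE μ B) :
    lowerApp μ A = lowerApp μ B ∧ upperApp μ A = upperApp μ B :=
  ⟨hR.lowerApp_congr hT h₁, hR.upperApp_congr hT h₂⟩

/-- the map `(A_E, A^E) ↦ (μ_[A]_R, μ_[A]^R)` is well-defined. -/
theorem stmt7 {U : Type*} (T : I → I → I) (μ : U → U → I)
    (hT : IsTnorm T) (hR : IsFuzzyTEquiv T μ) (hD : DuallyWellOrdered μ)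
    (A B : Set U) (h₁ : lowerE μ A = lowerE μ B) (h₂ : upperE μ A = upperE μ B) :
    lowerApp μ A = lowerApp μ B ∧ upperApp μ A = upperApp μ B :=
  stmt7_general T μ hT hR A B h₁ h₂
end
end

section
/- Let T be a t-norm and let R be a fuzzy T-equivalence on a set U with a dually well-ordered spectrum. If A, B ⊆ U satisfy μ_{[A]_R}(x) ≤ μ_{[B]_R}(x) and μ_{[A]^R}(x) ≤ μ_{[B]^R}(x) for all x ∈ U, then A_E ⊆ B_E and A^E ⊆ B^E; i.e., the map sending the crisp rough set (A_E, A^E) to the fuzzy rough set (μ_{[A]_R}, μ_{[A]^R}) reflects the order. -/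
open unitInterval

/-! A dually well-ordered spectrum makes the infimum in `μ_[A]_R x` and the supremum in
`μ_[A]^R x` attained, so `x ∈ A_E` iff `0 < μ_[A]_R x` and `x ∈ A^E` iff `μ_[A]^R x = 1`.
Both conditions are upward closed, hence pass from `A` to `B`. -/

section

variable {U : Type*} {μ : U → U → I} {A : Set U} {x : U}

theorem DuallyWellOrdered.exists_max_image (hD : DuallyWellOrdered μ) (x : U) {s : Set U}
    (hs : s.Nonempty) : ∃ y ∈ s, ∀ z ∈ s, μ x z ≤ μ x y := by
  obtain ⟨_, ⟨y, hy, rfl⟩, hmax⟩ :=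
    hD (μ x '' s) (by rintro _ ⟨z, -, rfl⟩; exact ⟨x, z, rfl⟩) (hs.image _)
  exact ⟨y, hy, fun z hz => hmax _ ⟨z, hz, rfl⟩⟩

theorem mem_lowerE_of_lowerApp_pos (h : 0 < lowerApp μ A x) : x ∈ lowerE μ A := by
  intro y (hy : μ x y = 1)
  by_contra hyA
  have : lowerApp μ A x ≤ σ (μ x y) := sInf_le ⟨y, hyA, rfl⟩
  rw [hy, symm_one] at this
  exact this.not_gt h

theorem DuallyWellOrdered.lowerApp_pos_of_mem_lowerE (hD : DuallyWellOrdered μ)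
    (hx : x ∈ lowerE μ A) : 0 < lowerApp μ A x := by
  rcases Aᶜ.eq_empty_or_nonempty with hA | hA
  · rw [lowerApp, hA, Set.image_empty, sInf_empty]
    exact zero_lt_one' I
  obtain ⟨y, hyA, hmax⟩ := hD.exists_max_image x hA
  have hy : μ x y < 1 := lt_of_le_of_ne le_one' fun h1 => hyA (hx h1)
  calc (0 : I) = σ 1 := symm_one.symm
    _ < σ (μ x y) := symm_lt_symm.mpr hy
    _ ≤ lowerApp μ A x := le_sInf <| by
      rintro _ ⟨z, hz, rfl⟩
      exact symm_le_symm.mpr (hmax z hz)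

theorem DuallyWellOrdered.mem_lowerE_iff (hD : DuallyWellOrdered μ) :
    x ∈ lowerE μ A ↔ 0 < lowerApp μ A x :=
  ⟨hD.lowerApp_pos_of_mem_lowerE, mem_lowerE_of_lowerApp_pos⟩

theorem upperApp_eq_one_of_mem_upperE (hx : x ∈ upperE μ A) : upperApp μ A x = 1 := by
  obtain ⟨y, hy, hyA⟩ := hx
  exact le_antisymm le_one' (hy ▸ le_sSup ⟨y, hyA, rfl⟩)

theorem DuallyWellOrdered.mem_upperE_of_upperApp_eq_one (hD : DuallyWellOrdered μ)
    (h : upperApp μ A x = 1) : x ∈ upperE μ A := by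
  rcases A.eq_empty_or_nonempty with hA | hA
  · simp only [upperApp, hA, Set.image_empty, sSup_empty] at h
    exact absurd h zero_ne_one
  obtain ⟨y, hyA, hmax⟩ := hD.exists_max_image x hA
  have hy : μ x y = 1 := le_antisymm le_one' <| calc
    1 = upperApp μ A x := h.symm
    _ ≤ μ x y := sSup_le <| by
      rintro _ ⟨z, hz, rfl⟩
      exact hmax z hz
  exact ⟨y, hy, hyA⟩

theorem DuallyWellOrdered.mem_upperE_iff (hD : DuallyWellOrdered μ) :
    x ∈ upperE μ A ↔ upperApp μ A x = 1 :=
  ⟨upperApp_eq_one_of_mem_upperE, hD.mem_upperE_of_upperApp_eq_one⟩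

end

theorem stmt9_general {U : Type*} (μ : U → U → I)
    (hD : DuallyWellOrdered μ)
    (A B : Set U)
    (h : ∀ x : U, lowerApp μ A x ≤ lowerApp μ B x ∧ upperApp μ A x ≤ upperApp μ B x) :
    lowerE μ A ⊆ lowerE μ B ∧ upperE μ A ⊆ upperE μ B := by
  refine ⟨fun x hx => ?_, fun x hx => ?_⟩
  · rw [hD.mem_lowerE_iff] at hx ⊢
    exact hx.trans_le (h x).1
  · rw [hD.mem_upperE_iff] at hx ⊢
    exact le_antisymm le_one' (hx ▸ (h x).2)

/-- the map `(A_E, A^E) ↦ (μ_[A]_R, μ_[A]^R)` reflects the order. -/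
theorem stmt9 {U : Type*} (T : I → I → I) (μ : U → U → I)
    (hT : IsTnorm T) (hR : IsFuzzyTEquiv T μ) (hD : DuallyWellOrdered μ)
    (A B : Set U)
    (h : ∀ x : U, lowerApp μ A x ≤ lowerApp μ B x ∧ upperApp μ A x ≤ upperApp μ B x) :
    lowerE μ A ⊆ lowerE μ B ∧ upperE μ A ⊆ upperE μ B :=
  stmt9_general μ hD A B h
end

section
/- Let T be a t-norm and let R be a fuzzy T-equivalence on a set U. Then for any subset A ⊆ U, μ_{[A]_R}(x) = μ_{[A]^R}(x) for all x ∈ U if and only if A_S = A^S; i.e., the fuzzy rough set of A is exact if and only if A is an exact set for the support relation S. -/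
open unitInterval

noncomputable section

/- The values `0` and `1` of the fuzzy approximations are read off from the support relation
alone, and reflexivity forces `[A]^R = 1` on `A` and `[A]_R = 0` off `A`. Hence the two
approximations agree at `x` exactly when `x ∈ A_S` or `x ∉ A^S`; as `A_S ⊆ A ⊆ A^S` by
reflexivity, this holds at every point iff `A_S = A^S`. -/

section FuzzyRoughApprox

variable {U : Type*} {μ : U → U → I} {A : Set U} {x : U}

theorem lowerApp_eq_one_iff : lowerApp μ A x = 1 ↔ x ∈ lowerS μ A := by
  change sInf _ = ⊤ ↔ _
  simp only [sInf_eq_top, Set.forall_mem_image, lowerS, Set.mem_ofPred_eq, Set.subset_def,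
    Set.mem_compl_iff, pos_iff_ne_zero]
  exact forall_congr' fun y => (imp_congr_right fun _ => symm_eq_one).trans not_imp_comm

theorem upperApp_eq_zero_iff : upperApp μ A x = 0 ↔ x ∉ upperS μ A := by
  change sSup _ = ⊥ ↔ _
  simp only [sSup_eq_bot, Set.forall_mem_image, upperS, Set.mem_ofPred_eq,
    Set.not_nonempty_iff_eq_empty, Set.eq_empty_iff_forall_notMem, Set.mem_inter_iff, not_and,
    pos_iff_ne_zero]
  exact forall_congr' fun y => not_imp_not.symm

variable (hrefl : ∀ x, μ x x = 1)
include hrefl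

theorem lowerS_subset : lowerS μ A ⊆ A := fun x hx =>
  hx (show 0 < μ x x by simp [hrefl])

theorem subset_upperS : A ⊆ upperS μ A := fun x hx =>
  ⟨x, show 0 < μ x x by simp [hrefl], hx⟩

theorem upperApp_eq_one_of_mem (hx : x ∈ A) : upperApp μ A x = 1 :=
  le_antisymm le_one' (hrefl x ▸ le_sSup ⟨x, hx, rfl⟩)

theorem lowerApp_eq_zero_of_notMem (hx : x ∉ A) : lowerApp μ A x = 0 :=
  le_antisymm ((sInf_le (Set.mem_image_of_mem _ hx)).trans_eq (by simp [hrefl])) nonneg'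

theorem lowerApp_eq_upperApp_iff :
    lowerApp μ A x = upperApp μ A x ↔ x ∈ lowerS μ A ∨ x ∉ upperS μ A := by
  by_cases hx : x ∈ A
  · simp [upperApp_eq_one_of_mem hrefl hx, lowerApp_eq_one_iff, subset_upperS hrefl hx]
  · rw [lowerApp_eq_zero_of_notMem hrefl hx, eq_comm, upperApp_eq_zero_iff]
    exact (or_iff_right fun h => hx (lowerS_subset hrefl h)).symm

end FuzzyRoughApprox

theorem stmt11_general {U : Type*} (T : I → I → I) (μ : U → U → I)
    (hR : IsFuzzyTEquiv T μ) (A : Set U) :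
    (∀ x : U, lowerApp μ A x = upperApp μ A x) ↔ lowerS μ A = upperS μ A := by
  obtain ⟨hrefl, -, -⟩ := hR
  simp only [lowerApp_eq_upperApp_iff hrefl]
  constructor
  · intro h
    exact ((lowerS_subset hrefl).trans (subset_upperS hrefl)).antisymm
      fun x hx => (h x).resolve_right (not_not.mpr hx)
  · intro h x
    rw [h]
    exact em _

/-- the fuzzy rough set of `A` is exact iff `A` is exact for the
support relation `S`. -/
theorem stmt11 {U : Type*} (T : I → I → I) (μ : U → U → I)
    (hT : IsTnorm T) (hR : IsFuzzyTEquiv T μ) (A : Set U) :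
    (∀ x : U, lowerApp μ A x = upperApp μ A x) ↔ lowerS μ A = upperS μ A :=
  stmt11_general T μ hR A
end
end
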